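/- (Lossless expansion of a Pre-LN MLP module with residual connection.) Let g(x) = x + MLP(LN(x; μ, β, ε)) on ℝ^{D_S}, where LN is LayerNorm with parameters μ, β ∈ ℝ^{D_S}, ε > 0, and MLP(y) = W₂·σ(W₁·y + b₁) + b₂ with W₁ ∈ ℝ^{H_S×D_S}, b₁ ∈ ℝ^{H_S}, W₂ ∈ ℝ^{D_S×H_S}, b₂ ∈ ℝ^{D_S} and entrywise σ : ℝ → ℝ. Let LN* be the expanded LayerNorm of dimension D_T ≥ D_S with parameters μ*[i] = η·μ[i mod D_S] for i < k·D_S, μ*[i] = η·ζ[i − k·D_S] otherwise (arbitrary ζ ∈ ℝ^r), β* = V_zero(β), ε* = η²·ε, where k = ⌊D_T/D_S⌋, r = D_T mod D_S, η = √(k·D_S/D_T). Let MLP* be an expanded MLP of input/output dimension D_T and hidden dimension H_T ≥ H_S constructed so that MLP*(V_zero(y)) = V_avg(MLP(y)) for all y ∈ ℝ^{D_S} (e.g. by row-circular/column-random expansion of W₁ with b₁* = V_circ(b₁), and row-average/column-circular expansion of W₂ with b₂* = V_avg(b₂)). Then the expanded block g*(z) = z + MLP*(LN*(z)) satisfies g*(V_avg(x))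 = V_avg(g(x)) for all x ∈ ℝ^{D_S}. -/

import Mathlib

/-! The copies of `x` inside `V_avg x` keep its mean, and the tail entries equal that mean, so
`V_avg x` has the mean of `x` and `k·D_S/D_T = η²` times its variance. With `ε* = η²ε` the
normaliser of `LN*` is `η` times that of `LN`, which the factor `η` in `μ*` cancels; the tail
entries are centred to `0`, matching the zero tail of `β*`. Hence `LN*(V_avg x) = V_zero(LN x)`,
the hypothesis on `MLP*` turns this into `V_avg(MLP(LN x))`, and `V_avg` is additive. -/

/-- Index bound for the tail part of an expansion from dimension `DS` to `DT`. -/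
theorem sub_lt_mod (DS DT i : ℕ) (hDS : 0 < DS) (hi : i < DT) (h2 : DT / DS * DS ≤ i) :
    i - DT / DS * DS < DT % DS := by
  have h := Nat.div_add_mod' DT DS
  set m := DT / DS * DS
  omega

/-- Average expansion `V_avg` from `ℝ^{DS}` to `ℝ^{DT}`. -/
noncomputable def vAvg (DS DT : ℕ) (hDS : 0 < DS) (x : Fin DS → ℝ) : Fin DT → ℝ :=
  fun i => if i.val < DT / DS * DS then x ⟨i.val % DS, Nat.mod_lt _ hDS⟩
           else (∑ j, x j) / (DS : ℝ)

/-- Zero expansion `V_zero` from `ℝ^{DS}` to `ℝ^{DT}`. -/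
def vZero (DS DT : ℕ) (hDS : 0 < DS) (x : Fin DS → ℝ) : Fin DT → ℝ :=
  fun i => if i.val < DT / DS * DS then x ⟨i.val % DS, Nat.mod_lt _ hDS⟩ else 0

/-- Circular expansion `V_circ` from `ℝ^{DS}` to `ℝ^{DT}`. -/
def vCirc (DS DT : ℕ) (hDS : 0 < DS) (x : Fin DS → ℝ) : Fin DT → ℝ :=
  fun i => x ⟨i.val % DS, Nat.mod_lt _ hDS⟩

/-- Mean of a vector. -/
noncomputable def meanV {D : ℕ} (x : Fin D → ℝ) : ℝ := (∑ i, x i) / (D : ℝ)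

/-- Population variance of a vector. -/
noncomputable def varV {D : ℕ} (x : Fin D → ℝ) : ℝ := (∑ i, (x i - meanV x) ^ 2) / (D : ℝ)

/-- LayerNorm with scale `μ`, bias `β` and constant `ε`. -/
noncomputable def layerNorm {D : ℕ} (x μ β : Fin D → ℝ) (ε : ℝ) : Fin D → ℝ :=
  fun i => μ i * (x i - meanV x) / Real.sqrt (varV x + ε) + β i

/-- `η = √(⌊D_T/D_S⌋·D_S/D_T)`. -/
noncomputable def eta (DS DT : ℕ) : ℝ :=
  Real.sqrt (((DT / DS * DS : ℕ) : ℝ) / (DT : ℝ))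

/-- The expanded scale `μ*`: `μ*[i] = η·μ[i mod D_S]` for `i < ⌊D_T/D_S⌋·D_S`,
and `μ*[i] = η·ζ[i − ⌊D_T/D_S⌋·D_S]` otherwise. -/
noncomputable def muStar (DS DT : ℕ) (hDS : 0 < DS) (η : ℝ) (μ : Fin DS → ℝ)
    (ζ : Fin (DT % DS) → ℝ) : Fin DT → ℝ :=
  fun i => if h : i.val < DT / DS * DS
    then η * μ ⟨i.val % DS, Nat.mod_lt _ hDS⟩
    else η * ζ ⟨i.val - DT / DS * DS, sub_lt_mod DS DT i.val hDS i.isLt (Nat.not_lt.mp h)⟩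

open Finset

theorem sum_range_mul_mod {M : Type*} [AddCommMonoid M] (k : ℕ) {n : ℕ} (hn : 0 < n)
    (f : Fin n → M) :
    ∑ i ∈ range (k * n), f ⟨i % n, Nat.mod_lt _ hn⟩ = k • ∑ j, f j := by
  induction k with
  | zero => simp
  | succ k ih =>
    rw [Nat.succ_mul, sum_range_add, ih, succ_nsmul,
      ← Fin.sum_univ_eq_sum_range (fun i => f ⟨(k * n + i) % n, Nat.mod_lt _ hn⟩)]
    congr 1
    refine Fintype.sum_congr _ _ fun j => congrArg f (Fin.ext ?_)
    simp [Nat.mod_eq_of_lt j.isLt]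

def vExpand (DS DT : ℕ) (hDS : 0 < DS) (x : Fin DS → ℝ) (c : ℝ) : Fin DT → ℝ :=
  fun i => if i.val < DT / DS * DS then x ⟨i.val % DS, Nat.mod_lt _ hDS⟩ else c

section Expansion

variable (DS DT : ℕ) (hDS : 0 < DS)

theorem vAvg_eq_vExpand (x : Fin DS → ℝ) : vAvg DS DT hDS x = vExpand DS DT hDS x (meanV x) :=
  rfl

theorem comp_vExpand (g : ℝ → ℝ) (x : Fin DS → ℝ) (c : ℝ) :
    (fun i => g (vExpand DS DT hDS x c i)) = vExpand DS DT hDS (fun j => g (x j)) (g c) := by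
  funext i
  exact apply_ite g _ _ _

theorem vExpand_add (x y : Fin DS → ℝ) (c d : ℝ) :
    vExpand DS DT hDS x c + vExpand DS DT hDS y d = vExpand DS DT hDS (x + y) (c + d) := by
  funext i
  simp only [Pi.add_apply, vExpand]
  split_ifs <;> rfl

theorem sum_vExpand (x : Fin DS → ℝ) (c : ℝ) :
    ∑ i, vExpand DS DT hDS x c i = (DT / DS : ℕ) * ∑ j, x j + (DT % DS : ℕ) * c := by
  have hm : DT / DS * DS ≤ DT := Nat.div_mul_le_self DT DS
  have htail : DT - DT / DS * DS = DT % DS := by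
    have := Nat.div_add_mod' DT DS
    omega
  unfold vExpand
  rw [Fin.sum_univ_eq_sum_range
      (fun i => if i < DT / DS * DS then x ⟨i % DS, Nat.mod_lt _ hDS⟩ else c),
    ← sum_range_add_sum_Ico _ hm,
    sum_congr rfl fun i hi => if_pos (mem_range.mp hi),
    sum_congr rfl fun i hi => if_neg (not_lt.mpr (mem_Ico.mp hi).1),
    sum_range_mul_mod _ hDS, sum_const, Nat.card_Ico, htail, nsmul_eq_mul, nsmul_eq_mul]

end Expansion

theorem meanV_add {D : ℕ} (x y : Fin D → ℝ) : meanV (x + y) = meanV x + meanV y := by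
  simp only [meanV, Pi.add_apply, sum_add_distrib, add_div]

theorem vAvg_add (DS DT : ℕ) (hDS : 0 < DS) (x y : Fin DS → ℝ) :
    vAvg DS DT hDS x + vAvg DS DT hDS y = vAvg DS DT hDS (x + y) := by
  rw [vAvg_eq_vExpand, vAvg_eq_vExpand, vAvg_eq_vExpand, vExpand_add, meanV_add]

theorem meanV_vAvg {DS DT : ℕ} (hDS : 0 < DS) (hDT : 0 < DT) (x : Fin DS → ℝ) :
    meanV (vAvg DS DT hDS x) = meanV x := by
  have hsplit : ((DT / DS : ℕ) : ℝ) * DS + (DT % DS : ℕ) = DT := by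
    exact_mod_cast Nat.div_add_mod' DT DS
  rw [vAvg_eq_vExpand, meanV, sum_vExpand, meanV]
  field_simp
  linear_combination (∑ j, x j) * hsplit

theorem varV_vAvg {DS DT : ℕ} (hDS : 0 < DS) (hDT : 0 < DT) (x : Fin DS → ℝ) :
    varV (vAvg DS DT hDS x) = ((DT / DS * DS : ℕ) : ℝ) / DT * varV x := by
  have hsq : (fun i => (vAvg DS DT hDS x i - meanV x) ^ 2)
      = vExpand DS DT hDS (fun j => (x j - meanV x) ^ 2) 0 := by
    rw [vAvg_eq_vExpand, comp_vExpand DS DT hDS (fun t => (t - meanV x) ^ 2)]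
    norm_num
  rw [varV, meanV_vAvg hDS hDT, hsq, sum_vExpand, varV]
  push_cast
  field_simp
  ring

theorem eta_nonneg (DS DT : ℕ) : 0 ≤ eta DS DT :=
  Real.sqrt_nonneg _

theorem eta_pos {DS DT : ℕ} (h : 0 < DT / DS * DS) : 0 < eta DS DT := by
  have hDT : 0 < DT := h.trans_le (Nat.div_mul_le_self DT DS)
  exact Real.sqrt_pos.mpr (by positivity)

theorem eta_sq (DS DT : ℕ) : eta DS DT ^ 2 = ((DT / DS * DS : ℕ) : ℝ) / DT :=
  Real.sq_sqrt (by positivity)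

theorem sqrt_varV_vAvg_add {DS DT : ℕ} (hDS : 0 < DS) (hDT : 0 < DT) (x : Fin DS → ℝ) (ε : ℝ) :
    √(varV (vAvg DS DT hDS x) + eta DS DT ^ 2 * ε) = eta DS DT * √(varV x + ε) := by
  rw [varV_vAvg hDS hDT, ← eta_sq, ← mul_add, Real.sqrt_mul (sq_nonneg _),
    Real.sqrt_sq (eta_nonneg DS DT)]

theorem layerNorm_vAvg {DS DT : ℕ} (hDS : 0 < DS) (μ β : Fin DS → ℝ) (ε : ℝ)
    (ζ : Fin (DT % DS) → ℝ) (x : Fin DS → ℝ) :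
    layerNorm (vAvg DS DT hDS x) (muStar DS DT hDS (eta DS DT) μ ζ) (vZero DS DT hDS β)
        (eta DS DT ^ 2 * ε)
      = vZero DS DT hDS (layerNorm x μ β ε) := by
  funext i
  rw [layerNorm, meanV_vAvg hDS i.pos, sqrt_varV_vAvg_add hDS i.pos]
  by_cases h : i.val < DT / DS * DS
  · have hη := (eta_pos (Nat.zero_lt_of_lt h)).ne'
    simp only [muStar, vAvg, vZero, layerNorm, dif_pos h, if_pos h]
    rw [mul_assoc, mul_div_mul_left _ _ hη]
  · simp only [muStar, vAvg, vZero, dif_neg h, if_neg h]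
    rw [← meanV, sub_self, mul_zero, zero_div, zero_add]

theorem stmt_16_general (DS DT HS : ℕ) (hDS : 0 < DS)
    (μ β : Fin DS → ℝ) (ε : ℝ)
    (W1 : Matrix (Fin HS) (Fin DS) ℝ) (b1 : Fin HS → ℝ)
    (W2 : Matrix (Fin DS) (Fin HS) ℝ) (b2 : Fin DS → ℝ) (σ : ℝ → ℝ)
    (ζ : Fin (DT % DS) → ℝ)
    (MLPstar : (Fin DT → ℝ) → (Fin DT → ℝ))
    (hMLP : ∀ y : Fin DS → ℝ,
      MLPstar (vZero DS DT hDS y)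
        = vAvg DS DT hDS (W2.mulVec (fun i => σ ((W1.mulVec y + b1) i)) + b2))
    (x : Fin DS → ℝ) :
    vAvg DS DT hDS x
        + MLPstar (layerNorm (vAvg DS DT hDS x) (muStar DS DT hDS (eta DS DT) μ ζ)
            (vZero DS DT hDS β) ((eta DS DT) ^ 2 * ε))
      = vAvg DS DT hDS
          (x + (W2.mulVec (fun i => σ ((W1.mulVec (layerNorm x μ β ε) + b1) i)) + b2)) := by
  rw [layerNorm_vAvg, hMLP, vAvg_add]

/-- lossless expansion of a Pre-LN MLP module with residual
connection: if `LN*` is the expanded LayerNorm and `MLP*` is any expanded MLP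
satisfying `MLP*(V_zero(y)) = V_avg(MLP(y))` for all `y`, then the expanded block
`g*(z) = z + MLP*(LN*(z))` satisfies `g*(V_avg(x)) = V_avg(x + MLP(LN(x)))`. -/
theorem stmt_16 (DS DT HS : ℕ) (hDS : 0 < DS) (hDT : DS ≤ DT)
    (μ β : Fin DS → ℝ) (ε : ℝ) (hε : 0 < ε)
    (W1 : Matrix (Fin HS) (Fin DS) ℝ) (b1 : Fin HS → ℝ)
    (W2 : Matrix (Fin DS) (Fin HS) ℝ) (b2 : Fin DS → ℝ) (σ : ℝ → ℝ)
    (ζ : Fin (DT % DS) → ℝ)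
    (MLPstar : (Fin DT → ℝ) → (Fin DT → ℝ))
    (hMLP : ∀ y : Fin DS → ℝ,
      MLPstar (vZero DS DT hDS y)
        = vAvg DS DT hDS (W2.mulVec (fun i => σ ((W1.mulVec y + b1) i)) + b2))
    (x : Fin DS → ℝ) :
    vAvg DS DT hDS x
        + MLPstar (layerNorm (vAvg DS DT hDS x) (muStar DS DT hDS (eta DS DT) μ ζ)
            (vZero DS DT hDS β) ((eta DS DT) ^ 2 * ε))
      = vAvg DS DT hDS
          (x + (W2.mulVec (fun i => σ ((W1.mulVec (layerNorm x μ β ε) + b1) i)) + b2)) :=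
  stmt_16_general DS DT HS hDS μ β ε W1 b1 W2 b2 σ ζ MLPstar hMLP x
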